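/- arXiv:2105.04732 — 10 statements merged into one kernel-verified Lean document; each statement's English description precedes it below -/
import Mathlib

section
/- Let K be a field, r ≥ 1, and a : ℕʳ → K an r-sequence. Suppose there exist finitely many polynomials p₁,…,p_s in r variables with coefficients in the algebraic closure K̄ of K, and tuples γ₁,…,γ_s ∈ K̄ʳ, such that a(n₁,…,n_r) = Σ_{j=1}^{s} p_j(n₁,…,n_r)·γ_{j,1}^{n₁}⋯γ_{j,r}^{n_r} for all but finitely many tuples (n₁,…,n_r) ∈ ℕʳ (natural numbers evaluated in K̄ via the canonical map ℕ → K̄). Then for each 1 ≤ i ≤ r, the K-linear span of the set of shifts {S_iⁿ a : n ∈ ℕ} inside K^(ℕʳ) is finite-dimensional. -/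
/-!
Over `L = K̄`, the functions `n ↦ q(n) γⁿ` with `q` of total degree `≤ D` form a finite-dimensional
space stable under every shift, because `q(n + m) γⁿ⁺ᵐ = γᵐ q'(n) γⁿ` with `q' = q(X + m)` of the
same total degree. The finitely many exceptional values only contribute, after any shift, functions
supported on the (finite) lower closure of the exceptional set. Hence all shifts of `a` lie in one
finite-dimensional `L`-space, and since `K`-linearly independent `K`-valued functions remain
`L`-linearly independent, their `K`-span is finite-dimensional.
-/

def mshift {K : Type*} [Field K] {r : ℕ} (a : (Fin r → ℕ) → K) (m : Fin r → ℕ) :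
    (Fin r → ℕ) → K :=
  fun n => a (n + m)

open MvPolynomial Function

section ScalarExtension

variable {K L S : Type*} [Field K] [Field L] [Algebra K L]

theorem LinearIndependent.algebraMap_comp {ι : Type*} {v : ι → S → K}
    (hv : LinearIndependent K v) : LinearIndependent L fun i => algebraMap K L ∘ v i := by
  rw [linearIndependent_iff'] at hv ⊢
  intro t c hc i hi
  by_contra hci
  obtain ⟨π, hπ⟩ := Module.Projective.exists_dual_ne_zero K hci
  refine hπ (hv t (fun j => π (c j)) ?_ i hi)
  funext x
  have := congr_arg π (congr_fun hc x)
  simp only [Finset.sum_apply, Pi.smul_apply, comp_apply, smul_eq_mul, map_sum, Pi.zero_apply,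
    map_zero] at this ⊢
  simpa [mul_comm (c _), ← Algebra.smul_def, mul_comm (π _)] using this

theorem finiteDimensional_span_of_algebraMap_comp_mem {X : Set (S → K)}
    (V : Submodule L (S → L)) [FiniteDimensional L V] (hX : ∀ x ∈ X, algebraMap K L ∘ x ∈ V) :
    FiniteDimensional K (Submodule.span K X) := by
  obtain ⟨B, hBX, hspan, hB⟩ := exists_linearIndependent K X
  have hBV : LinearIndependent L fun x : B => (⟨_, hX x (hBX x.2)⟩ : V) :=
    LinearIndependent.of_comp V.subtype hB.algebraMap_comp
  have : Finite B := hBV.finite_of_isNoetherian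
  rw [← hspan]
  exact FiniteDimensional.span_of_finite K (Set.toFinite B)

end ScalarExtension

theorem MvPolynomial.totalDegree_bind₁_le {R σ τ : Type*} [CommSemiring R]
    {g : σ → MvPolynomial τ R} (hg : ∀ i, (g i).totalDegree ≤ 1) (q : MvPolynomial σ R) :
    (bind₁ g q).totalDegree ≤ q.totalDegree := by
  conv_lhs => rw [q.as_sum, map_sum]
  refine (totalDegree_finsetSum _ _).trans (Finset.sup_le fun d hd => ?_)
  rw [bind₁_monomial]
  refine (totalDegree_mul _ _).trans ?_
  rw [totalDegree_C, zero_add]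
  refine (totalDegree_finsetProd _ _).trans
    ((Finset.sum_le_sum fun i _ => ?_).trans (le_totalDegree hd))
  exact (totalDegree_pow _ _).trans (by simpa using Nat.mul_le_mul_left (d i) (hg i))

section ExpPoly

variable {L : Type*} [Field L]

noncomputable def expPolyMap {σ : Type*} [Fintype σ] (γ : σ → L) :
    MvPolynomial σ L →ₗ[L] (σ → ℕ) → L where
  toFun q n := eval (fun i => (n i : L)) q * ∏ i, γ i ^ n i
  map_add' _ _ := by ext; simp [add_mul]
  map_smul' _ _ := by ext; simp [mul_assoc]

@[simp]
theorem expPolyMap_apply {σ : Type*} [Fintype σ] (γ : σ → L) (q : MvPolynomial σ L)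
    (n : σ → ℕ) :
    expPolyMap γ q n = eval (fun i => (n i : L)) q * ∏ i, γ i ^ n i :=
  rfl

variable {r : ℕ}

theorem mshift_expPolyMap (γ : Fin r → L) (q : MvPolynomial (Fin r) L) (m : Fin r → ℕ) :
    mshift (expPolyMap γ q) m =
      (∏ i, γ i ^ m i) • expPolyMap γ (bind₁ (fun i => X i + C (m i : L)) q) := by
  funext n
  have heval : eval (fun i => (n i : L)) (bind₁ (fun i => X i + C (m i : L)) q) =
      eval (fun i => ((n + m) i : L)) q := by
    rw [show eval _ (bind₁ _ q) = _ from eval₂Hom_bind₁ _ _ _ q]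
    simp
  simp only [mshift, expPolyMap_apply, Pi.smul_apply, smul_eq_mul, heval, Pi.add_apply, pow_add,
    Finset.prod_mul_distrib]
  ring

theorem mshift_expPolyMap_mem_map_restrictTotalDegree (γ : Fin r → L) {D : ℕ}
    {q : MvPolynomial (Fin r) L} (hq : q.totalDegree ≤ D) (m : Fin r → ℕ) :
    mshift (expPolyMap γ q) m ∈ (restrictTotalDegree (Fin r) L D).map (expPolyMap γ) := by
  rw [mshift_expPolyMap]
  refine Submodule.smul_mem _ _ (Submodule.mem_map_of_mem ?_)
  rw [mem_restrictTotalDegree]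
  refine (totalDegree_bind₁_le (fun i => ?_) q).trans hq
  exact (totalDegree_add _ _).trans
    (max_le (totalDegree_X i).le (by rw [totalDegree_C]; exact zero_le_one))

theorem support_mshift_subset_lowerClosure (f : (Fin r → ℕ) → L) (m : Fin r → ℕ) :
    support (mshift f m) ⊆ lowerClosure (support f) :=
  fun n hn => ⟨n + m, hn, fun _ => Nat.le_add_right _ _⟩

end ExpPoly

section FiniteSupport

variable {S R : Type*} [Semiring R] {T : Set S}

theorem mem_map_lcoeFun_supported {f : S → R} (hT : T.Finite) (hf : support f ⊆ T) :
    f ∈ (Finsupp.supported R R T).map Finsupp.lcoeFun :=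
  ⟨Finsupp.ofSupportFinite f (hT.subset hf),
    by simpa [Finsupp.mem_supported, Finsupp.ofSupportFinite_support] using hf, rfl⟩

theorem finite_map_lcoeFun_supported (hT : T.Finite) :
    Module.Finite R ((Finsupp.supported R R T).map Finsupp.lcoeFun) :=
  have : Finite T := hT.to_subtype
  have := Module.Finite.equiv (Finsupp.supportedEquivFinsupp (M := R) (R := R) T).symm
  Module.Finite.map _ _

end FiniteSupport

theorem finiteDimensional_span_mshift_of_finite_ne_sum_expPolyMap {L : Type*} [Field L] {r : ℕ}
    {ι : Type*} [Fintype ι] (b : (Fin r → ℕ) → L) (p : ι → MvPolynomial (Fin r) L)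
    (γ : ι → Fin r → L) (h : {n | b n ≠ ∑ j, expPolyMap (γ j) (p j) n}.Finite) :
    FiniteDimensional L (Submodule.span L (Set.range (mshift b))) := by
  set D := Finset.univ.sup fun j => (p j).totalDegree
  set T := (lowerClosure {n | b n ≠ ∑ j, expPolyMap (γ j) (p j) n} : Set (Fin r → ℕ))
  have hT : T.Finite := h.lowerClosure
  have := finite_map_lcoeFun_supported (R := L) hT
  suffices hle : Submodule.span L (Set.range (mshift b)) ≤
      (⨆ j, (restrictTotalDegree (Fin r) L D).map (expPolyMap (γ j))) ⊔
        (Finsupp.supported L L T).map Finsupp.lcoeFun from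
    Submodule.finiteDimensional_of_le hle
  refine Submodule.span_le.2 ?_
  rintro _ ⟨m, rfl⟩
  have hsplit : mshift b m = ∑ j, mshift (expPolyMap (γ j) (p j)) m +
      mshift (fun n => b n - ∑ j, expPolyMap (γ j) (p j) n) m := by
    funext n; simp [mshift]
  rw [hsplit]
  refine Submodule.add_mem_sup (Submodule.sum_mem _ fun j _ => Submodule.mem_iSup_of_mem j ?_) ?_
  · exact mshift_expPolyMap_mem_map_restrictTotalDegree _
      (Finset.le_sup (f := fun j => (p j).totalDegree) (Finset.mem_univ j)) m
  · refine mem_map_lcoeFun_supported hT ((support_mshift_subset_lowerClosure _ m).trans ?_)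
    exact lowerClosure_mono fun n hn => sub_ne_zero.1 hn

theorem exp_poly_imp_coordinate_shifts_finiteDimensional_general {K : Type*} [Field K] {r : ℕ}
    (a : (Fin r → ℕ) → K) (s : ℕ)
    (p : Fin s → MvPolynomial (Fin r) (AlgebraicClosure K))
    (γ : Fin s → Fin r → AlgebraicClosure K)
    (h : {n : Fin r → ℕ | algebraMap K (AlgebraicClosure K) (a n) ≠
        ∑ j : Fin s, MvPolynomial.eval (fun i => (n i : AlgebraicClosure K)) (p j) *
          ∏ i : Fin r, γ j i ^ n i}.Finite) :
    ∀ i : Fin r, FiniteDimensional K (Submodule.span K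
      (Set.range fun n : ℕ => mshift a (Pi.single i n))) := by
  intro i
  set b := algebraMap K (AlgebraicClosure K) ∘ a
  have := finiteDimensional_span_mshift_of_finite_ne_sum_expPolyMap b p γ h
  refine finiteDimensional_span_of_algebraMap_comp_mem (Submodule.span _ (Set.range (mshift b))) ?_
  rintro _ ⟨t, rfl⟩
  exact Submodule.subset_span ⟨Pi.single i t, rfl⟩

/-- if an `r`-sequence is given, off a finite set, by an exponential-polynomial
expression over the algebraic closure, then for each `i` the span of the coordinate shifts
`S_iⁿ a` is finite-dimensional. -/
theorem exp_poly_imp_coordinate_shifts_finiteDimensional {K : Type*} [Field K] {r : ℕ}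
    (hr : 1 ≤ r) (a : (Fin r → ℕ) → K) (s : ℕ)
    (p : Fin s → MvPolynomial (Fin r) (AlgebraicClosure K))
    (γ : Fin s → Fin r → AlgebraicClosure K)
    (h : {n : Fin r → ℕ | algebraMap K (AlgebraicClosure K) (a n) ≠
        ∑ j : Fin s, MvPolynomial.eval (fun i => (n i : AlgebraicClosure K)) (p j) *
          ∏ i : Fin r, γ j i ^ n i}.Finite) :
    ∀ i : Fin r, FiniteDimensional K (Submodule.span K
      (Set.range fun n : ℕ => mshift a (Pi.single i n))) :=
  exp_poly_imp_coordinate_shifts_finiteDimensional_general a s p γ h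
end

section
/- Let K be a field, r ≥ 1, and a : ℕʳ → K an r-sequence such that for each 1 ≤ i ≤ r the K-linear span of the shifts {S_iⁿ a : n ∈ ℕ} inside K^(ℕʳ) is finite-dimensional. Then there exist a polynomial P ∈ K[t₁,…,t_r] and single-variable polynomials Q₁(t₁),…,Q_r(t_r), each with nonzero constant term, such that H_a · Q₁(t₁)⋯Q_r(t_r) = P in K[[t₁,…,t_r]]. -/
/-- The Hilbert series of an `r`-sequence `a : ℕʳ → K`, i.e. the multivariate formal
power series `Σ_{n ∈ ℕʳ} a(n)·t₁^{n₁}⋯t_r^{n_r}`. -/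
def hilbertSeries {K : Type*} [Field K] {r : ℕ} (a : (Fin r → ℕ) → K) :
    MvPowerSeries (Fin r) K :=
  fun d => a d

/-!
Since the shifts `S_iⁿ a` span a finite-dimensional space, they satisfy a linear recurrence: there
is a nonzero `q_i` with `∑ₖ q_{i,k} a(m + k eᵢ) = 0` for all `m`. Let `Q_i` be the reversal of
`q_i`, so that `Q_i(0)` is the leading coefficient of `q_i`. For `nᵢ ≥ deg q_i` the coefficient of
`H_a · Q_i(tᵢ)` at `n` is that recurrence at `m = n - (deg q_i) eᵢ`, hence zero. The remaining
factors `Q_j(t_j)`, `j ≠ i`, do not involve `tᵢ` and so preserve this vanishing. Therefore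
`H_a · ∏ Q_i(tᵢ)` is supported in the box `nᵢ < deg q_i` and is a polynomial.
-/

open Finset Polynomial

theorem exists_ne_zero_sum_coeff_smul_eq_zero {K V : Type*} [Field K] [AddCommGroup V]
    [Module K V] (v : ℕ → V) [FiniteDimensional K (Submodule.span K (Set.range v))] :
    ∃ q : K[X], q ≠ 0 ∧ ∑ k ∈ range (q.natDegree + 1), q.coeff k • v k = 0 := by
  let L : K[X] →ₗ[K] V := lsum fun k => LinearMap.toSpanSingleton K V (v k)
  have hL : L ∘ basisMonomials K = v := by ext k; simp [L]
  have hv : ¬ LinearIndependent K v := fun hv =>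
    Module.Finite.not_linearIndependent_of_infinite _ (linearIndependent_span hv)
  obtain ⟨q, hq, hq0⟩ : ∃ q, L q = 0 ∧ q ≠ 0 := by
    by_contra! h
    exact hv (hL ▸ (basisMonomials K).linearIndependent.map' L (LinearMap.ker_eq_bot'.mpr h))
  refine ⟨q, hq0, ?_⟩
  rw [← hq]
  simp [L, sum_over_range]

namespace MvPolynomial

variable {σ R : Type*} [CommSemiring R]

theorem aeval_X_mem_supported (i : σ) (Q : R[X]) :
    Polynomial.aeval (X i) Q ∈ supported R ({i} : Set σ) := by
  rw [supported_eq_adjoin_X, Set.image_singleton]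
  exact aeval_mem_adjoin_singleton R _

theorem coeff_eq_zero_of_mem_supported {p : MvPolynomial σ R} {s : Set σ}
    (hp : p ∈ supported R s) {d : σ →₀ ℕ} {i : σ} (hi : d i ≠ 0) (his : i ∉ s) :
    coeff d p = 0 := by
  by_contra hd
  exact his <| mem_supported.mp hp <|
    (mem_vars_iff_mem_support i).mpr ⟨d, mem_support_iff.mpr hd, Finsupp.mem_support_iff.mpr hi⟩

end MvPolynomial

namespace MvPowerSeries

variable {σ R : Type*} [CommSemiring R]

theorem coe_aeval_X (i : σ) (Q : R[X]) :
    ((Polynomial.aeval (MvPolynomial.X i) Q : MvPolynomial σ R) : MvPowerSeries σ R) =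
      Polynomial.aeval (X i) Q := by
  simpa using (Polynomial.aeval_algHom_apply (MvPolynomial.coeToMvPowerSeries.algHom R)
    (MvPolynomial.X i) Q).symm

theorem coeff_mul_aeval_X (φ : MvPowerSeries σ R) (i : σ) (Q : R[X]) {n : σ →₀ ℕ} {N : ℕ}
    (hQ : Q.natDegree ≤ N) (hN : N ≤ n i) :
    coeff n (φ * Polynomial.aeval (X i) Q) =
      ∑ k ∈ range (N + 1), Q.coeff k * coeff (n - Finsupp.single i k) φ := by
  rw [aeval_eq_sum_range' (Nat.lt_succ_of_le hQ), mul_sum, map_sum]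
  refine sum_congr rfl fun k hk => ?_
  rw [X_pow_eq, mul_smul_comm, map_smul, coeff_mul_monomial, if_pos, mul_one, smul_eq_mul]
  exact Finsupp.single_le_iff.mpr (by grind)

theorem coeff_mul_aeval_X_reverse_eq_zero (φ : MvPowerSeries σ R) (i : σ) (q : R[X])
    (hrec : ∀ m, ∑ k ∈ range (q.natDegree + 1),
      q.coeff k * coeff (m + Finsupp.single i k) φ = 0)
    {n : σ →₀ ℕ} (hn : q.natDegree ≤ n i) :
    coeff n (φ * Polynomial.aeval (X i) q.reverse) = 0 := by
  set D := q.natDegree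
  rw [coeff_mul_aeval_X φ i q.reverse (reverse_natDegree_le q) hn, ← sum_range_reflect,
    ← hrec (n - Finsupp.single i D)]
  refine sum_congr rfl fun k hk => ?_
  have hk : k ≤ D := Nat.lt_succ_iff.mp (mem_range.mp hk)
  have hshift :
      n - Finsupp.single i (D + 1 - 1 - k) = n - Finsupp.single i D + Finsupp.single i k := by
    ext j
    rcases eq_or_ne i j with rfl | hij
    · simp only [Finsupp.tsub_apply, Finsupp.add_apply, Finsupp.single_eq_same]
      omega
    · simp [hij]
  rw [coeff_reverse, revAt_le (by omega), hshift]
  congr 2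
  omega

theorem coeff_mul_eq_zero_of_mem_supported_compl {φ : MvPowerSeries σ R} {i : σ} {D : ℕ}
    (hφ : ∀ m, D ≤ m i → coeff m φ = 0) {p : MvPolynomial σ R}
    (hp : p ∈ MvPolynomial.supported R {i}ᶜ) {n : σ →₀ ℕ} (hn : D ≤ n i) :
    coeff n (φ * (p : MvPowerSeries σ R)) = 0 := by
  classical
  rw [coeff_mul]
  refine sum_eq_zero fun ⟨u, v⟩ huv => ?_
  rw [HasAntidiagonal.mem_antidiagonal] at huv
  by_cases hv : v i = 0
  · have hu : u i = n i := by rw [← huv, Finsupp.add_apply, hv, add_zero]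
    rw [hφ u (hu ▸ hn), zero_mul]
  · rw [MvPolynomial.coeff_coe,
      MvPolynomial.coeff_eq_zero_of_mem_supported hp hv (Set.notMem_compl_iff.mpr rfl), mul_zero]

theorem coe_trunc'_eq_self [DecidableEq σ] {φ : MvPowerSeries σ R} {n : σ →₀ ℕ}
    (h : ∀ m, ¬ m ≤ n → coeff m φ = 0) : (trunc' R n φ : MvPowerSeries σ R) = φ := by
  ext m
  rw [MvPolynomial.coeff_coe, coeff_trunc']
  split_ifs with hm
  · rfl
  · exact (h m hm).symm

end MvPowerSeries

@[simp]
theorem coeff_hilbertSeries {K : Type*} [Field K] {r : ℕ} (a : (Fin r → ℕ) → K)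
    (n : Fin r →₀ ℕ) : MvPowerSeries.coeff n (hilbertSeries a) = a n :=
  rfl

theorem exists_recurrence_hilbertSeries {K : Type*} [Field K] {r : ℕ} (a : (Fin r → ℕ) → K)
    (i : Fin r) [FiniteDimensional K (Submodule.span K
      (Set.range fun n : ℕ => mshift a (Pi.single i n)))] :
    ∃ q : K[X], q ≠ 0 ∧ ∀ m : Fin r →₀ ℕ, ∑ k ∈ range (q.natDegree + 1),
      q.coeff k * MvPowerSeries.coeff (m + Finsupp.single i k) (hilbertSeries a) = 0 := by
  obtain ⟨q, hq0, hq⟩ :=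
    exists_ne_zero_sum_coeff_smul_eq_zero (K := K) fun n => mshift a (Pi.single i n)
  refine ⟨q, hq0, fun m => ?_⟩
  simpa [mshift, Finsupp.single_eq_pi_single] using congrFun hq m

theorem coordinate_shifts_finiteDimensional_imp_rational_sep_denominator_general
    {K : Type*} [Field K] {r : ℕ} (a : (Fin r → ℕ) → K)
    (h : ∀ i : Fin r, FiniteDimensional K (Submodule.span K
      (Set.range fun n : ℕ => mshift a (Pi.single i n)))) :
    ∃ (P : MvPolynomial (Fin r) K) (Q : Fin r → Polynomial K),
      (∀ i, (Q i).coeff 0 ≠ 0) ∧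
      hilbertSeries a *
        (((∏ i, Polynomial.aeval (MvPolynomial.X i) (Q i)) : MvPolynomial (Fin r) K) :
          MvPowerSeries (Fin r) K) = (P : MvPowerSeries (Fin r) K) := by
  choose q hq0 hrec using fun i => have := h i; exists_recurrence_hilbertSeries a i
  have hvanish : ∀ n i, (q i).natDegree ≤ n i → MvPowerSeries.coeff n (hilbertSeries a *
      (((∏ i, aeval (MvPolynomial.X i) (q i).reverse) : MvPolynomial (Fin r) K) :
        MvPowerSeries (Fin r) K)) = 0 := by
    intro n i hn
    rw [← mul_prod_erase univ _ (mem_univ i), MvPolynomial.coe_mul, ← mul_assoc,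
      MvPowerSeries.coe_aeval_X]
    refine MvPowerSeries.coeff_mul_eq_zero_of_mem_supported_compl
      (fun m hm => MvPowerSeries.coeff_mul_aeval_X_reverse_eq_zero _ i _ (hrec i) hm)
      (Subalgebra.prod_mem _ fun j hj => ?_) hn
    exact MvPolynomial.supported_mono (by simpa using (ne_of_mem_erase hj).symm)
      (MvPolynomial.aeval_X_mem_supported j _)
  refine ⟨MvPowerSeries.trunc' K (Finsupp.equivFunOnFinite.symm fun i => (q i).natDegree) _,
    fun i => (q i).reverse, fun i => ?_, (MvPowerSeries.coe_trunc'_eq_self fun m hm => ?_).symm⟩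
  · rw [coeff_zero_reverse]
    exact leadingCoeff_ne_zero.mpr (hq0 i)
  · obtain ⟨i, hi⟩ := not_forall.mp (mt Finsupp.le_def.mpr hm)
    exact hvanish m i (le_of_lt (by simpa using hi))

/-- if for each coordinate `i` the span of the shifts `S_iⁿ a` is
finite-dimensional, then `H_a · Q₁(t₁)⋯Q_r(t_r)` is a polynomial for suitable
single-variable polynomials `Qᵢ` with nonzero constant terms. -/
theorem coordinate_shifts_finiteDimensional_imp_rational_sep_denominator
    {K : Type*} [Field K] {r : ℕ} (hr : 1 ≤ r) (a : (Fin r → ℕ) → K)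
    (h : ∀ i : Fin r, FiniteDimensional K (Submodule.span K
      (Set.range fun n : ℕ => mshift a (Pi.single i n)))) :
    ∃ (P : MvPolynomial (Fin r) K) (Q : Fin r → Polynomial K),
      (∀ i, (Q i).coeff 0 ≠ 0) ∧
      hilbertSeries a *
        (((∏ i, Polynomial.aeval (MvPolynomial.X i) (Q i)) : MvPolynomial (Fin r) K) :
          MvPowerSeries (Fin r) K) = (P : MvPowerSeries (Fin r) K) :=
  coordinate_shifts_finiteDimensional_imp_rational_sep_denominator_general a h
end

section
/- Let K be a field, r ≥ 1, and let a, b : ℕʳ → K be C-finite r-sequences. Then the Hadamard product ab : ℕʳ → K, defined by (ab)(n) = a(n)·b(n), is C-finite. -/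
/-- An `r`-sequence is C-finite if the `K`-linear span of all its shifts `Sᵐa`, `m ∈ ℕʳ`,
inside `K^(ℕʳ)` is finite-dimensional. -/
def IsCFinite (K : Type*) [Field K] {r : ℕ} (a : (Fin r → ℕ) → K) : Prop :=
  FiniteDimensional K (Submodule.span K (Set.range (mshift a)))

/-- the Hadamard product of two C-finite `r`-sequences is C-finite. -/
theorem hadamard_cfinite_mul_cfinite {K : Type*} [Field K] {r : ℕ} (hr : 1 ≤ r)
    (a b : (Fin r → ℕ) → K) (ha : IsCFinite K a) (hb : IsCFinite K b) :
    IsCFinite K (fun n => a n * b n) := by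
  unfold IsCFinite at *
  set A := Submodule.span K (Set.range (mshift a)) with hAdef
  set B := Submodule.span K (Set.range (mshift b)) with hBdef
  have hAfg : A.FG := (Submodule.fg_iff_finiteDimensional A).mpr ha
  have hBfg : B.FG := (Submodule.fg_iff_finiteDimensional B).mpr hb
  have hABfg : (A * B).FG := Submodule.FG.mul hAfg hBfg
  have hAB : FiniteDimensional K (A * B) := (Submodule.fg_iff_finiteDimensional _).mp hABfg
  have hle : Submodule.span K (Set.range (mshift (fun n => a n * b n))) ≤ A * B := by
    rw [Submodule.span_le]
    rintro _ ⟨m, rfl⟩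
    have hm : mshift (fun n => a n * b n) m = mshift a m * mshift b m := rfl
    rw [hm]
    exact Submodule.mul_mem_mul (Submodule.subset_span ⟨m, rfl⟩)
      (Submodule.subset_span ⟨m, rfl⟩)
  exact Submodule.finiteDimensional_of_le hle
end

section
/- Let K be a field, r ≥ 2, and let a : ℕʳ → K be a rational r-sequence such that for each (r−1)-tuple (n₁,…,n_{r−1}) ∈ ℕ^{r−1} the set {n_r ∈ ℕ : a(n₁,…,n_{r−1},n_r) ≠ 0} is finite. Then the (r−1)-sequence a' : ℕ^{r−1} → K defined by a'(n₁,…,n_{r−1}) = Σ_{n_r ∈ ℕ} a(n₁,…,n_{r−1},n_r) (a finite sum) is rational. -/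
/-- An `r`-sequence is rational if there are polynomials `P, Q ∈ K[t₁,…,t_r]` with `Q`
having nonzero constant term such that `H_a · Q = P` in `K[[t₁,…,t_r]]`. -/
def IsRationalMSeq {K : Type*} [Field K] {r : ℕ} (a : (Fin r → ℕ) → K) : Prop :=
  ∃ P Q : MvPolynomial (Fin r) K, MvPolynomial.coeff 0 Q ≠ 0 ∧
    hilbertSeries a * (Q : MvPowerSeries (Fin r) K) = (P : MvPowerSeries (Fin r) K)

/-!
Write `σ` for summing out the last variable of a power series that is finitely supported along
it, and `π` for the substitution `t_{r+1} = 1` in polynomials. Shifting the summation index gives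
`σ (f · Q) = σ f · π Q`, so `H_a · Q = P` yields `σ H_a · π Q = π P`, and it remains to make
`π Q ≠ 0` and to clear a denominator with vanishing constant term.

Factor `Q = (t_{r+1} - 1)^k V` with `π V ≠ 0`. The series `H_a · V` is still finitely supported
along the last variable, and if such a series times `t_{r+1} - 1` is a polynomial `P`, then
`π P = 0`, so `t_{r+1} - 1` divides `P` and the series is itself a polynomial; hence `H_a · V` is
a polynomial. Finally, if `f q = p` with `q ≠ 0`, then `p` lies in `(q) + 𝔪ⁿ` for all `n`, where
`𝔪` is the ideal of the variables; Krull's intersection theorem in `K[t] / (q)` gives `x ∈ 𝔪` with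
`(1 - x) p ∈ (q)`, and `1 - x` is a denominator with constant term `1`.
-/

namespace Finsupp

variable {M : Type*} [Zero M] {r : ℕ}

noncomputable def snoc (m : Fin r →₀ M) (j : M) : Fin (r + 1) →₀ M :=
  equivFunOnFinite.symm (Fin.snoc m j)

noncomputable def init (d : Fin (r + 1) →₀ M) : Fin r →₀ M :=
  equivFunOnFinite.symm (Fin.init d)

@[simp] theorem coe_snoc (m : Fin r →₀ M) (j : M) : ⇑(snoc m j) = Fin.snoc m j := rfl

@[simp] theorem snoc_init_self (d : Fin (r + 1) →₀ M) : snoc (init d) (d (Fin.last r)) = d :=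
  DFunLike.coe_injective (Fin.snoc_init_self (q := ⇑d))

@[simp] theorem snoc_eq_zero_iff {m : Fin r →₀ M} {j : M} : snoc m j = 0 ↔ m = 0 ∧ j = 0 := by
  simp [Finsupp.ext_iff, Fin.forall_fin_succ']

theorem snoc_le_snoc_iff [Preorder M] {m m' : Fin r →₀ M} {j j' : M} :
    snoc m j ≤ snoc m' j' ↔ m ≤ m' ∧ j ≤ j' := by
  rw [← coe_le_coe, coe_snoc, coe_snoc, ← coe_le_coe, and_comm]
  exact (Fin.snocOrderIso fun _ => M).le_iff_le (x := (j, ⇑m)) (y := (j', ⇑m'))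

theorem snoc_tsub_snoc (m m' : Fin r →₀ ℕ) (j j' : ℕ) :
    snoc m j - snoc m' j' = snoc (m - m') (j - j') := by
  ext i; induction i using Fin.lastCases <;> simp

end Finsupp

theorem finsum_ite_le_tsub {M : Type*} [AddCommMonoid M] (g : ℕ → M) (k : ℕ) :
    ∑ᶠ j, (if k ≤ j then g (j - k) else 0) = ∑ᶠ j, g j := by
  rw [← finsum_mem_univ, finsum_mem_inter_support_eq' _ _ (Set.range (· + k)),
    finsum_mem_range (add_left_injective k)]
  · simp
  · intro j hj
    simp only [Function.mem_support, ne_eq, ite_eq_right_iff, not_forall] at hj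
    simpa using ⟨j - k, Nat.sub_add_cancel hj.1⟩

open Finsupp (snoc snoc_init_self)

namespace MvPolynomial

variable {R : Type*} [CommSemiring R] {r : ℕ}

noncomputable def evalLastOne : MvPolynomial (Fin (r + 1)) R →ₐ[R] MvPolynomial (Fin r) R :=
  aeval (Fin.snoc X 1)

theorem evalLastOne_monomial_snoc (e : Fin r →₀ ℕ) (k : ℕ) (c : R) :
    evalLastOne (monomial (snoc e k) c) = monomial e c := by
  rw [evalLastOne, aeval_monomial, monomial_eq, Finsupp.prod_fintype _ _ (fun _ => pow_zero _),
    Finsupp.prod_fintype _ _ (fun _ => pow_zero _), Fin.prod_univ_castSucc]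
  simp [algebraMap_eq]

noncomputable def lastEquiv :
    MvPolynomial (Fin (r + 1)) R ≃ₐ[R] Polynomial (MvPolynomial (Fin r) R) :=
  (renameEquiv R finSuccEquivLast).trans (optionEquivLeft R (Fin r))

theorem lastEquiv_X_last :
    lastEquiv (X (Fin.last r) : MvPolynomial (Fin (r + 1)) R) = Polynomial.X := by
  simp [lastEquiv, optionEquivLeft_X_none]

theorem lastEquiv_X_castSucc (i : Fin r) :
    lastEquiv (X i.castSucc : MvPolynomial (Fin (r + 1)) R) = Polynomial.C (X i) := by
  simp [lastEquiv, optionEquivLeft_X_some]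

theorem evalLastOne_eq_eval_lastEquiv (W : MvPolynomial (Fin (r + 1)) R) :
    evalLastOne W = (lastEquiv W).eval 1 := by
  suffices (evalLastOne : MvPolynomial (Fin (r + 1)) R →ₐ[R] _) =
      ((Polynomial.aeval 1).restrictScalars R).comp lastEquiv.toAlgHom from
    DFunLike.congr_fun this W
  refine algHom_ext fun i => ?_
  induction i using Fin.lastCases with
  | last => simp [evalLastOne, lastEquiv_X_last]
  | cast i => simp [evalLastOne, lastEquiv_X_castSucc]

end MvPolynomial

namespace MvPowerSeries

variable {R : Type*} [CommSemiring R] {r : ℕ} {f g : MvPowerSeries (Fin (r + 1)) R}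

def FiniteAlongLast (f : MvPowerSeries (Fin (r + 1)) R) : Prop :=
  ∀ m : Fin r →₀ ℕ, Function.HasFiniteSupport fun j => coeff (snoc m j) f

-- `∑ᶠ` is `0` on infinite supports, so `sumLast` is only meaningful under `FiniteAlongLast`.
noncomputable def sumLast (f : MvPowerSeries (Fin (r + 1)) R) : MvPowerSeries (Fin r) R :=
  fun m => ∑ᶠ j, coeff (snoc m j) f

theorem coeff_sumLast (f : MvPowerSeries (Fin (r + 1)) R) (m : Fin r →₀ ℕ) :
    coeff m (sumLast f) = ∑ᶠ j, coeff (snoc m j) f :=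
  rfl

theorem FiniteAlongLast.add (hf : FiniteAlongLast f) (hg : FiniteAlongLast g) :
    FiniteAlongLast (f + g) :=
  fun m => by simp only [map_add]; exact (hf m).add (hg m)

theorem sumLast_add (hf : FiniteAlongLast f) (hg : FiniteAlongLast g) :
    sumLast (f + g) = sumLast f + sumLast g := by
  ext m
  simp only [coeff_sumLast, map_add]
  exact finsum_add_distrib (hf m) (hg m)

theorem coeff_snoc_mul_monomial_snoc (f : MvPowerSeries (Fin (r + 1)) R) (m e : Fin r →₀ ℕ)
    (j k : ℕ) (c : R) :
    coeff (snoc m j) (f * monomial (snoc e k) c) =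
      if e ≤ m ∧ k ≤ j then coeff (snoc (m - e) (j - k)) f * c else 0 := by
  simp only [coeff_mul_monomial, Finsupp.snoc_le_snoc_iff, Finsupp.snoc_tsub_snoc]

theorem FiniteAlongLast.mul_monomial_snoc (hf : FiniteAlongLast f) (e : Fin r →₀ ℕ) (k : ℕ)
    (c : R) : FiniteAlongLast (f * monomial (snoc e k) c) := by
  intro m
  refine ((hf (m - e)).image (· + k)).subset fun j hj => ?_
  rw [Function.mem_support, coeff_snoc_mul_monomial_snoc] at hj
  split_ifs at hj with h
  · exact ⟨j - k, left_ne_zero_of_mul hj, by simp only; omega⟩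
  · exact absurd rfl hj

theorem sumLast_mul_monomial_snoc (hf : FiniteAlongLast f) (e : Fin r →₀ ℕ) (k : ℕ) (c : R) :
    sumLast (f * monomial (snoc e k) c) = sumLast f * monomial e c := by
  ext m
  simp_rw [coeff_mul_monomial, coeff_sumLast, coeff_snoc_mul_monomial_snoc]
  by_cases h : e ≤ m
  · simp only [h, true_and, if_true]
    rw [finsum_ite_le_tsub (fun j => coeff (snoc (m - e) j) f * c), finsum_mul' _ _ (hf (m - e))]
  · simp [h]

theorem FiniteAlongLast.mul_coe (hf : FiniteAlongLast f) (Q : MvPolynomial (Fin (r + 1)) R) :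
    FiniteAlongLast (f * (Q : MvPowerSeries (Fin (r + 1)) R)) := by
  induction Q using MvPolynomial.induction_on' with
  | monomial d c =>
    rw [MvPolynomial.coe_monomial, ← snoc_init_self d]
    exact hf.mul_monomial_snoc _ _ c
  | add p q hp hq => rw [MvPolynomial.coe_add, mul_add]; exact hp.add hq

theorem sumLast_mul_coe (hf : FiniteAlongLast f) (Q : MvPolynomial (Fin (r + 1)) R) :
    sumLast (f * (Q : MvPowerSeries (Fin (r + 1)) R)) =
      sumLast f * (MvPolynomial.evalLastOne Q : MvPowerSeries (Fin r) R) := by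
  induction Q using MvPolynomial.induction_on' with
  | monomial d c =>
    rw [← snoc_init_self d, MvPolynomial.coe_monomial, MvPolynomial.evalLastOne_monomial_snoc,
      MvPolynomial.coe_monomial, sumLast_mul_monomial_snoc hf]
  | add p q hp hq =>
    rw [MvPolynomial.coe_add, mul_add, sumLast_add (hf.mul_coe p) (hf.mul_coe q), hp, hq, map_add,
      MvPolynomial.coe_add, mul_add]

theorem finiteAlongLast_one : FiniteAlongLast (1 : MvPowerSeries (Fin (r + 1)) R) := by
  intro m
  refine (Set.finite_singleton 0).subset fun j hj => ?_
  simp_all [coeff_one]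

theorem sumLast_one : sumLast (1 : MvPowerSeries (Fin (r + 1)) R) = 1 := by
  ext m
  by_cases hm : m = 0
  · simp only [coeff_sumLast, coeff_one, hm, Finsupp.snoc_eq_zero_iff, true_and, if_true]
    exact (finsum_eq_single _ 0 fun j hj => if_neg hj).trans (if_pos rfl)
  · simp [coeff_sumLast, coeff_one, hm]

theorem sumLast_coe (Q : MvPolynomial (Fin (r + 1)) R) :
    sumLast (Q : MvPowerSeries (Fin (r + 1)) R) =
      (MvPolynomial.evalLastOne Q : MvPowerSeries (Fin r) R) := by
  simpa [sumLast_one] using sumLast_mul_coe finiteAlongLast_one Q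

end MvPowerSeries

namespace MvPolynomial

variable {R : Type*} [CommRing R] {r : ℕ}

theorem X_last_sub_one_dvd_iff {W : MvPolynomial (Fin (r + 1)) R} :
    X (Fin.last r) - 1 ∣ W ↔ evalLastOne W = 0 := by
  rw [evalLastOne_eq_eval_lastEquiv, ← Polynomial.IsRoot.def, ← Polynomial.dvd_iff_isRoot,
    ← map_dvd_iff lastEquiv, map_sub, map_one, lastEquiv_X_last, Polynomial.C_1]

theorem exists_eq_X_last_sub_one_pow_mul {Q : MvPolynomial (Fin (r + 1)) R} (hQ : Q ≠ 0) :
    ∃ (k : ℕ) (V : MvPolynomial (Fin (r + 1)) R),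
      Q = (X (Fin.last r) - 1) ^ k * V ∧ evalLastOne V ≠ 0 := by
  obtain ⟨V, hQV, hV⟩ := (lastEquiv Q).exists_eq_pow_rootMultiplicity_mul_and_not_dvd
    (by simpa using hQ) 1
  refine ⟨(lastEquiv Q).rootMultiplicity 1, lastEquiv.symm V, lastEquiv.injective ?_, ?_⟩
  · rw [map_mul, map_pow, map_sub, map_one, lastEquiv_X_last, AlgEquiv.apply_symm_apply,
      ← Polynomial.C_1]
    exact hQV
  · rw [Ne, ← X_last_sub_one_dvd_iff, ← map_dvd_iff lastEquiv]
    simpa [lastEquiv_X_last] using hV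

end MvPolynomial

namespace MvPowerSeries

def IsRational {σ R : Type*} [CommSemiring R] (f : MvPowerSeries σ R) : Prop :=
  ∃ P Q : MvPolynomial σ R, MvPolynomial.coeff 0 Q ≠ 0 ∧ f * Q = P

variable {σ R : Type*} [CommRing R]

theorem sub_truncTotal_mul_mem_pow_idealOfVars [Finite σ] {f : MvPowerSeries σ R}
    {p q : MvPolynomial σ R} (h : f * q = p) (n : ℕ) :
    p - truncTotal n f * q ∈ MvPolynomial.idealOfVars σ R ^ n := by
  have hmk := congrArg (truncTotalAlgHom σ R n) h
  have hcoe (s : MvPolynomial σ R) : truncTotalAlgHom σ R n s = Ideal.Quotient.mk _ s :=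
    (truncTotalAlgHom σ R n).commutes s
  rw [map_mul, hcoe, hcoe, truncTotalAlgHom_apply, ← map_mul, Ideal.Quotient.eq] at hmk
  simpa using neg_mem hmk

theorem isRational_of_mul_coe_eq_coe [Finite σ] [IsDomain R] [IsNoetherianRing R]
    {f : MvPowerSeries σ R} {p q : MvPolynomial σ R} (hq : q ≠ 0) (h : f * q = p) :
    f.IsRational := by
  let M := MvPolynomial σ R ⧸ Ideal.span {q}
  have hp : Ideal.Quotient.mk (Ideal.span {q}) p ∈
      (⨅ n : ℕ, MvPolynomial.idealOfVars σ R ^ n • ⊤ : Submodule (MvPolynomial σ R) M) := by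
    refine Submodule.mem_iInf _ |>.mpr fun n => ?_
    have hmem := sub_truncTotal_mul_mem_pow_idealOfVars h n
    have : Ideal.Quotient.mk (Ideal.span {q}) p =
        (p - truncTotal n f * q) • Ideal.Quotient.mk (Ideal.span {q}) 1 := by
      rw [← Ideal.Quotient.mk_eq_mk, ← Ideal.Quotient.mk_eq_mk, ← Submodule.Quotient.mk_smul,
        smul_eq_mul, mul_one, eq_comm, Submodule.Quotient.eq, sub_sub_cancel_left]
      exact neg_mem (Ideal.mul_mem_left _ _ (Ideal.mem_span_singleton_self q))
    rw [this]
    exact Submodule.smul_mem_smul hmem Submodule.mem_top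
  obtain ⟨⟨x, hx⟩, hxp⟩ := (Ideal.mem_iInf_smul_pow_eq_bot_iff _ _).mp hp
  obtain ⟨g, hg⟩ : ∃ g, g * q = (1 - x) * p := by
    have : Ideal.Quotient.mk (Ideal.span {q}) ((1 - x) * p) = 0 := by
      rw [sub_mul, one_mul, map_sub, sub_eq_zero, eq_comm, map_mul]
      exact hxp
    simpa [eq_comm, Ideal.mem_span_singleton'] using Ideal.Quotient.eq_zero_iff_mem.mp this
  refine ⟨g, 1 - x, ?_, ?_⟩
  · have := (MvPolynomial.mem_pow_idealOfVars_iff' 1 x).mp (by simpa using hx) 0 (by simp)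
    simp [this]
  · apply mul_right_cancel₀ (MvPolynomial.coe_eq_zero_iff.not.mpr hq)
    rw [mul_right_comm, h, ← MvPolynomial.coe_mul, ← MvPolynomial.coe_mul, hg, mul_comm]

variable [IsDomain R] {r : ℕ} {G : MvPowerSeries (Fin (r + 1)) R}

theorem FiniteAlongLast.exists_coe_of_mul_X_last_sub_one (hG : FiniteAlongLast G)
    {P : MvPolynomial (Fin (r + 1)) R}
    (h : G * ((MvPolynomial.X (Fin.last r) - 1 : MvPolynomial (Fin (r + 1)) R) :
      MvPowerSeries (Fin (r + 1)) R) = P) :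
    ∃ P' : MvPolynomial (Fin (r + 1)) R, G = P' := by
  have hP : MvPolynomial.evalLastOne P = 0 := by
    apply MvPolynomial.coe_eq_zero_iff.mp
    rw [← sumLast_coe, ← h, sumLast_mul_coe hG]
    simp [MvPolynomial.evalLastOne]
  obtain ⟨P', rfl⟩ := MvPolynomial.X_last_sub_one_dvd_iff.mpr hP
  refine ⟨P', mul_right_cancel₀ ?_ (h.trans ?_)⟩
  · rw [Ne, MvPolynomial.coe_eq_zero_iff]
    intro h0
    simpa using congrArg MvPolynomial.constantCoeff h0
  · rw [MvPolynomial.coe_mul, mul_comm]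

theorem FiniteAlongLast.exists_coe_of_mul_X_last_sub_one_pow (hG : FiniteAlongLast G)
    {P : MvPolynomial (Fin (r + 1)) R} (k : ℕ)
    (h : G * (((MvPolynomial.X (Fin.last r) - 1) ^ k : MvPolynomial (Fin (r + 1)) R) :
      MvPowerSeries (Fin (r + 1)) R) = P) :
    ∃ P' : MvPolynomial (Fin (r + 1)) R, G = P' := by
  induction k generalizing P with
  | zero => exact ⟨P, by simpa using h⟩
  | succ k ih =>
    obtain ⟨P₁, hP₁⟩ := (hG.mul_coe _).exists_coe_of_mul_X_last_sub_one
      (by rw [mul_assoc, ← MvPolynomial.coe_mul, ← pow_succ, h])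
    exact ih hP₁

end MvPowerSeries

open MvPowerSeries

theorem isRationalMSeq_finsum_snoc_iff {K : Type*} [Field K] {r : ℕ}
    (a : (Fin (r + 1) → ℕ) → K) :
    IsRationalMSeq (fun m : Fin r → ℕ => ∑ᶠ j : ℕ, a (Fin.snoc m j)) ↔
      (sumLast (hilbertSeries a)).IsRational :=
  Iff.rfl

theorem truncation_of_rational_is_rational_general {K : Type*} [Field K] {r : ℕ}
    (a : (Fin (r + 1) → ℕ) → K) (ha : IsRationalMSeq a)
    (hfin : ∀ m : Fin r → ℕ, {j : ℕ | a (Fin.snoc m j) ≠ 0}.Finite) :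
    IsRationalMSeq (fun m : Fin r → ℕ => ∑ᶠ j : ℕ, a (Fin.snoc m j)) := by
  obtain ⟨P, Q, hQ0, hHQ⟩ := ha
  have hH : FiniteAlongLast (hilbertSeries a) := fun m => hfin m
  have hQ : Q ≠ 0 := by rintro rfl; exact hQ0 (MvPolynomial.coeff_zero 0)
  obtain ⟨k, V, rfl, hV⟩ := MvPolynomial.exists_eq_X_last_sub_one_pow_mul hQ
  obtain ⟨P', hP'⟩ := (hH.mul_coe V).exists_coe_of_mul_X_last_sub_one_pow k
    (by rw [mul_assoc, ← MvPolynomial.coe_mul, mul_comm V, hHQ])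
  have hsum : sumLast (hilbertSeries a) *
      (MvPolynomial.evalLastOne V : MvPowerSeries (Fin r) K) = MvPolynomial.evalLastOne P' := by
    rw [← sumLast_mul_coe hH, hP', sumLast_coe]
  exact (isRationalMSeq_finsum_snoc_iff a).mpr (isRational_of_mul_coe_eq_coe hV hsum)

/-- if a rational `(r+1)`-sequence (`r + 1 ≥ 2`) has, for each fixed initial
`r`-tuple, only finitely many nonzero entries along the last coordinate, then summing out
the last coordinate yields a rational `r`-sequence. -/
theorem truncation_of_rational_is_rational {K : Type*} [Field K] {r : ℕ} (hr : 1 ≤ r)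
    (a : (Fin (r + 1) → ℕ) → K) (ha : IsRationalMSeq a)
    (hfin : ∀ m : Fin r → ℕ, {j : ℕ | a (Fin.snoc m j) ≠ 0}.Finite) :
    IsRationalMSeq (fun m : Fin r → ℕ => ∑ᶠ j : ℕ, a (Fin.snoc m j)) :=
  truncation_of_rational_is_rational_general a ha hfin
end

section
/- Let K be a field, r ≥ 1, and let a : ℕʳ → K be a C-finite r-sequence. Then the r-sequence b defined by b(n₁,n₂,…,n_r) = Σ_{i=0}^{n₁} a(i,n₂,…,n_r) is C-finite. -/
/-- Partial summation along coordinate `i₀` as a linear map. -/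
def psum {K : Type*} [Field K] {r : ℕ} (i₀ : Fin r) :
    ((Fin r → ℕ) → K) →ₗ[K] ((Fin r → ℕ) → K) where
  toFun f := fun n => ∑ i ∈ Finset.range (n i₀ + 1), f (Function.update n i₀ i)
  map_add' f g := by funext n; simp [Finset.sum_add_distrib]
  map_smul' c f := by funext n; simp [Finset.mul_sum]

lemma update_add_update {r : ℕ} (i₀ : Fin r) (n m : Fin r → ℕ) (i j : ℕ) :
    Function.update n i₀ i + Function.update m i₀ j
      = Function.update (n + m) i₀ (i + j) := by
  funext k
  by_cases h : k = i₀ <;> simp [h, Function.update_apply]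

lemma key {K : Type*} [Field K] {r : ℕ} (i₀ : Fin r) (a : (Fin r → ℕ) → K)
    (m : Fin r → ℕ) :
    mshift (psum i₀ a) m = psum i₀ (mshift a (Function.update m i₀ 0))
      + ∑ j ∈ Finset.range (m i₀), mshift a (Function.update m i₀ (j + 1)) := by
  funext n
  have h1 : ∀ i, Function.update n i₀ i + Function.update m i₀ 0
      = Function.update (n + m) i₀ i := by
    intro i; rw [update_add_update]; simp
  have h2 : ∀ j, n + Function.update m i₀ j
      = Function.update (n + m) i₀ (n i₀ + j) := by
    intro j
    funext k
    by_cases h : k = i₀ <;> simp [h, Function.update_apply]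
  simp only [mshift, psum, LinearMap.coe_mk, AddHom.coe_mk, Pi.add_apply,
    Finset.sum_apply, h1, h2]
  have : n i₀ + m i₀ + 1 = (n i₀ + 1) + m i₀ := by omega
  rw [this, Finset.sum_range_add]
  congr 1
  · apply Finset.sum_congr rfl
    intro j _
    have hj : n i₀ + 1 + j = n i₀ + (j + 1) := by omega
    rw [hj]

theorem Submodule.fd_of_le {K V : Type*} [Field K] [AddCommGroup V] [Module K V]
    {p q : Submodule K V} (h : p ≤ q) [FiniteDimensional K q] :
    FiniteDimensional K p :=
  Submodule.finiteDimensional_of_le h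

/-- partial sums along the first coordinate of a C-finite `r`-sequence form
a C-finite `r`-sequence. -/
theorem partial_sums_cfinite {K : Type*} [Field K] {r : ℕ} (hr : 1 ≤ r)
    (a : (Fin r → ℕ) → K) (ha : IsCFinite K a) :
    IsCFinite K (fun n : Fin r → ℕ =>
      ∑ i ∈ Finset.range (n ⟨0, hr⟩ + 1), a (Function.update n ⟨0, hr⟩ i)) := by
  set i₀ : Fin r := ⟨0, hr⟩
  set V : Submodule K ((Fin r → ℕ) → K) := Submodule.span K (Set.range (mshift a)) with hV
  have hb : (fun n : Fin r → ℕ =>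
      ∑ i ∈ Finset.range (n i₀ + 1), a (Function.update n i₀ i)) = psum i₀ a := rfl
  rw [IsCFinite, hb]
  haveI : FiniteDimensional K V := ha
  haveI : FiniteDimensional K (V.map (psum i₀)) := Module.Finite.map V (psum i₀)
  have hle : Submodule.span K (Set.range (mshift (psum i₀ a)))
      ≤ V.map (psum i₀) ⊔ V := by
    rw [Submodule.span_le]
    rintro _ ⟨m, rfl⟩
    rw [key i₀ a m]
    refine Submodule.add_mem _ (Submodule.mem_sup_left ?_) (Submodule.mem_sup_right ?_)
    · exact ⟨mshift a (Function.update m i₀ 0),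
        Submodule.subset_span (Set.mem_range_self _), rfl⟩
    · exact Submodule.sum_mem _ fun j _ =>
        Submodule.subset_span (Set.mem_range_self _)
  exact Submodule.fd_of_le hle
end

section
/- Let K be a field, r ≥ 1, let a : ℕʳ → K be a rational r-sequence, and let d ≥ 1 be an integer. Then the r-sequence b defined by b(n₁,n₂,…,n_r) = a(d·n₁,n₂,…,n_r) is rational. -/
/-!
Let `H · Q = P` with `Q(0) ≠ 0` and write `i` for the dilated variable. Over the subring
`K[…, tᵢ^d, …]`, the ring `K[t]` is free with basis `1, tᵢ, …, tᵢ^(d-1)`; the determinant `N` of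
multiplication by `Q` in this basis (the norm of `Q`) satisfies `Q ∣ N(…, tᵢ^d, …)` by the adjugate
argument, and its constant term is `Q(0)^d` because the matrix is lower triangular modulo the
variables. Then `H · N(…, tᵢ^d, …)` is a polynomial, and keeping only the exponents divisible by
`d` in the `i`-th slot commutes with multiplying by a series in `tᵢ^d`, so the dilated series
times `N` is a polynomial.
-/

open MvPolynomial Matrix

section Dilation

variable {σ R : Type*} [DecidableEq σ] (i : σ) (d : ℕ)

noncomputable def dilateExp : (σ →₀ ℕ) →+ (σ →₀ ℕ) where
  toFun m := m.update i (d * m i)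
  map_zero' := by ext; simp
  map_add' m n := by ext x; by_cases h : x = i <;> simp [Finsupp.update_apply, h, mul_add]

lemma dilateExp_apply (m : σ →₀ ℕ) (x : σ) :
    dilateExp i d m x = if x = i then d * m i else m x :=
  Finsupp.update_apply ..

variable {i d}

lemma dilateExp_le_dilateExp_iff [NeZero d] {m n : σ →₀ ℕ} :
    dilateExp i d m ≤ dilateExp i d n ↔ m ≤ n := by
  simp only [Finsupp.le_def, dilateExp_apply]
  refine forall_congr' fun x => ?_
  split_ifs with h
  · subst h; exact Nat.mul_le_mul_left_iff (Nat.pos_of_neZero d)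
  · rfl

lemma dilateExp_injective [NeZero d] : Function.Injective (dilateExp i d) := fun _ _ h =>
  le_antisymm (dilateExp_le_dilateExp_iff.1 h.le) (dilateExp_le_dilateExp_iff.1 h.ge)

lemma dilateExp_tsub (m n : σ →₀ ℕ) :
    dilateExp i d (m - n) = dilateExp i d m - dilateExp i d n := by
  ext x; by_cases h : x = i <;> simp [dilateExp_apply, h, Nat.mul_sub]

lemma dilateExp_update_div_add_single_mod (e : σ →₀ ℕ) :
    dilateExp i d (e.update i (e i / d)) + Finsupp.single i (e i % d) = e := by
  ext x; by_cases h : x = i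
  · subst h; simp [dilateExp_apply, Nat.div_add_mod]
  · simp [dilateExp_apply, h]

lemma mod_eq_of_dilateExp_add_single {m e : σ →₀ ℕ} {j : ℕ} (hj : j < d)
    (h : dilateExp i d m + Finsupp.single i j = e) : e i % d = j := by
  rw [← h, Finsupp.add_apply, dilateExp_apply, if_pos rfl, Finsupp.single_eq_same,
    Nat.mul_add_mod, Nat.mod_eq_of_lt hj]

section Polynomial

variable [CommSemiring R]

-- The substitution `X i ↦ X i ^ d`.
variable (i d) in
noncomputable def MvPolynomial.expandAt : MvPolynomial σ R →ₐ[R] MvPolynomial σ R :=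
  AddMonoidAlgebra.mapDomainAlgHom R R (dilateExp i d)

lemma MvPolynomial.expandAt_monomial (w : σ →₀ ℕ) (c : R) :
    expandAt i d (monomial w c) = monomial (dilateExp i d w) c :=
  AddMonoidAlgebra.mapDomain_single

lemma MvPolynomial.coeff_dilateExp_expandAt [NeZero d] (G : MvPolynomial σ R) (w : σ →₀ ℕ) :
    coeff (dilateExp i d w) (expandAt i d G) = coeff w G :=
  Finsupp.mapDomain_apply dilateExp_injective _ _

lemma MvPolynomial.coeff_expandAt_of_notMem_range (G : MvPolynomial σ R) {v : σ →₀ ℕ}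
    (hv : v ∉ Set.range (dilateExp i d)) : coeff v (expandAt i d G) = 0 :=
  Finsupp.mapDomain_of_notMem_range _ _ hv

-- `Gⱼ` in the decomposition `G = ∑_{j < d} X i ^ j * expandAt i d Gⱼ`.
variable (i d) in
noncomputable def MvPolynomial.dilateComponent [NeZero d] (j : ℕ) (G : MvPolynomial σ R) :
    MvPolynomial σ R :=
  .ofCoeff <| (AddMonoidAlgebra.coeff G).comapDomain
    (fun m => dilateExp i d m + Finsupp.single i j)
    ((add_left_injective _).comp dilateExp_injective).injOn

lemma MvPolynomial.coeff_dilateComponent [NeZero d] (j : ℕ) (G : MvPolynomial σ R)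
    (m : σ →₀ ℕ) :
    coeff m (dilateComponent i d j G) = coeff (dilateExp i d m + Finsupp.single i j) G :=
  rfl

lemma MvPolynomial.coeff_X_pow_mul_expandAt [NeZero d] {j : ℕ} (hj : j < d)
    (p : MvPolynomial σ R) (e : σ →₀ ℕ) :
    coeff e (X i ^ j * expandAt i d p) =
      if e i % d = j then coeff (e.update i (e i / d)) p else 0 := by
  rw [X_pow_eq_monomial]
  split_ifs with h
  · have he := dilateExp_update_div_add_single_mod (i := i) (d := d) e
    rw [h, add_comm] at he
    conv_lhs => rw [← he]
    rw [coeff_monomial_mul, one_mul, coeff_dilateExp_expandAt]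
  · rw [coeff_monomial_mul']
    split_ifs with hle
    · rw [one_mul, coeff_expandAt_of_notMem_range]
      rintro ⟨w, hw⟩
      exact h (mod_eq_of_dilateExp_add_single hj (by rw [hw, tsub_add_cancel_of_le hle]))
    · rfl

lemma MvPolynomial.sum_X_pow_mul_expandAt_dilateComponent [NeZero d] (G : MvPolynomial σ R) :
    ∑ j : Fin d, X i ^ (j : ℕ) * expandAt i d (dilateComponent i d j G) = G := by
  ext e
  simp only [coeff_sum, coeff_X_pow_mul_expandAt (Fin.is_lt _), coeff_dilateComponent]
  rw [Finset.sum_eq_single ⟨e i % d, Nat.mod_lt _ (Nat.pos_of_neZero d)⟩ (fun j _ hj =>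
      if_neg fun h => hj (Fin.ext h.symm)) (by simp), if_pos rfl]
  exact congrArg (coeff · G) (dilateExp_update_div_add_single_mod e)

end Polynomial

section PowerSeries

variable [CommSemiring R]

variable (i d) in
noncomputable def MvPowerSeries.dilate (F : MvPowerSeries σ R) : MvPowerSeries σ R :=
  fun m => MvPowerSeries.coeff (dilateExp i d m) F

lemma MvPowerSeries.coeff_dilate (F : MvPowerSeries σ R) (m : σ →₀ ℕ) :
    coeff m (dilate i d F) = coeff (dilateExp i d m) F :=
  rfl

lemma MvPolynomial.coe_dilateComponent_zero [NeZero d] (G : MvPolynomial σ R) :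
    (dilateComponent i d 0 G : MvPowerSeries σ R) = MvPowerSeries.dilate i d G := by
  ext m
  simp [MvPowerSeries.coeff_dilate, coeff_dilateComponent]

lemma MvPowerSeries.dilate_mul_expandAt [NeZero d] (F : MvPowerSeries σ R)
    (G : MvPolynomial σ R) :
    dilate i d (F * (expandAt i d G : MvPowerSeries σ R)) =
      dilate i d F * (G : MvPowerSeries σ R) := by
  induction G using MvPolynomial.induction_on' with
  | monomial w c =>
    ext m
    simp only [coeff_dilate, expandAt_monomial, coe_monomial, coeff_mul_monomial,
      dilateExp_le_dilateExp_iff, dilateExp_tsub]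
  | add G H hG hH =>
    ext m
    simpa only [map_add, coe_add, mul_add, coeff_dilate] using
      congrArg₂ (· + ·) (congrArg (coeff m) hG) (congrArg (coeff m) hH)

end PowerSeries

lemma Matrix.dvd_det_of_vecMul_eq_smul {n : Type*} [Fintype n] [DecidableEq n] [CommRing R]
    {A : Matrix n n R} {v : n → R} {c : R} {k : n} (hv : v k = 1) (h : v ᵥ* A = c • v) :
    c ∣ A.det := by
  have h' := congrArg (· ᵥ* A.adjugate) h
  simp only [vecMul_vecMul, mul_adjugate, vecMul_smul, smul_vecMul, vecMul_one] at h'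
  exact ⟨(v ᵥ* A.adjugate) k, by simpa [hv] using congrFun h' k⟩

section Norm

variable [CommRing R]

-- Multiplication by `Q` as a matrix over the image of `expandAt i d`, in the basis `X i ^ j`,
-- `j < d`; its determinant is the norm of `Q`.
variable (i d) in
noncomputable def MvPolynomial.mulMatrix [NeZero d] (Q : MvPolynomial σ R) :
    Matrix (Fin d) (Fin d) (MvPolynomial σ R) :=
  .of fun j s => dilateComponent i d j (X i ^ (s : ℕ) * Q)

lemma MvPolynomial.dvd_expandAt_det_mulMatrix [NeZero d] (Q : MvPolynomial σ R) :
    Q ∣ expandAt i d (mulMatrix i d Q).det := by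
  rw [AlgHom.map_det]
  refine dvd_det_of_vecMul_eq_smul (v := fun j : Fin d => X i ^ (j : ℕ))
    (k := ⟨0, Nat.pos_of_neZero d⟩) (pow_zero _) ?_
  funext s
  simp only [vecMul, dotProduct, AlgHom.mapMatrix_apply, map_apply, mulMatrix, of_apply,
    sum_X_pow_mul_expandAt_dilateComponent, Pi.smul_apply, smul_eq_mul]
  ring

lemma MvPolynomial.constantCoeff_mulMatrix [NeZero d] (Q : MvPolynomial σ R) (j s : Fin d) :
    constantCoeff (mulMatrix i d Q j s) = coeff (Finsupp.single i j) (X i ^ (s : ℕ) * Q) := by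
  rw [constantCoeff_eq, mulMatrix, of_apply, coeff_dilateComponent, map_zero, zero_add]

lemma MvPolynomial.constantCoeff_det_mulMatrix [NeZero d] (Q : MvPolynomial σ R) :
    constantCoeff (mulMatrix i d Q).det = constantCoeff Q ^ d := by
  rw [RingHom.map_det, det_of_isLowerTriangular]
  · simp only [RingHom.mapMatrix_apply, map_apply, constantCoeff_mulMatrix, X_pow_eq_monomial]
    have diag (s : Fin d) :
        coeff (Finsupp.single i (s : ℕ)) (monomial (Finsupp.single i (s : ℕ)) 1 * Q) =
          constantCoeff Q := by
      have h := coeff_monomial_mul 0 (Finsupp.single i (s : ℕ)) (1 : R) Q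
      rwa [add_zero, one_mul, ← constantCoeff_eq] at h
    simp [diag]
  · intro j s hjs
    rw [RingHom.mapMatrix_apply, map_apply, constantCoeff_mulMatrix, X_pow_eq_monomial,
      coeff_monomial_mul', if_neg]
    simpa using OrderDual.toDual_lt_toDual.1 hjs

end Norm

end Dilation

/-- dilating the first coordinate of a rational `r`-sequence by a factor
`d ≥ 1` yields a rational `r`-sequence. -/
theorem dilation_rational {K : Type*} [Field K] {r : ℕ} (hr : 1 ≤ r)
    (a : (Fin r → ℕ) → K) (ha : IsRationalMSeq a) (d : ℕ) (hd : 1 ≤ d) :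
    IsRationalMSeq (fun n : Fin r → ℕ =>
      a (Function.update n ⟨0, hr⟩ (d * n ⟨0, hr⟩))) := by
  obtain ⟨P, Q, hQ, hPQ⟩ := ha
  have : NeZero d := ⟨by omega⟩
  set i : Fin r := ⟨0, hr⟩
  obtain ⟨S, hS⟩ := dvd_expandAt_det_mulMatrix (i := i) (d := d) Q
  have hilbertSeries_dilate :
      hilbertSeries (fun n : Fin r → ℕ => a (Function.update n i (d * n i))) =
        MvPowerSeries.dilate i d (hilbertSeries a) := by
    ext m
    exact congrArg a (Finsupp.coe_update ..).symm
  refine ⟨dilateComponent i d 0 (P * S), (mulMatrix i d Q).det, ?_, ?_⟩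
  · rw [← constantCoeff_eq, constantCoeff_det_mulMatrix, constantCoeff_eq]
    exact pow_ne_zero d hQ
  · rw [hilbertSeries_dilate, ← MvPowerSeries.dilate_mul_expandAt, hS, coe_dilateComponent_zero,
      coe_mul, coe_mul, ← hPQ, mul_assoc]
end

section
/- Let K be a field, r ≥ 1, let a : ℕʳ → K be a C-finite r-sequence, and let d ≥ 1 be an integer. Then the r-sequence b defined by b(n₁,n₂,…,n_r) = a(d·n₁,n₂,…,n_r) is C-finite. -/
/-- dilating the first coordinate of a C-finite `r`-sequence by a factor
`d ≥ 1` yields a C-finite `r`-sequence. -/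
theorem dilation_cfinite {K : Type*} [Field K] {r : ℕ} (hr : 1 ≤ r)
    (a : (Fin r → ℕ) → K) (ha : IsCFinite K a) (d : ℕ) (hd : 1 ≤ d) :
    IsCFinite K (fun n : Fin r → ℕ =>
      a (Function.update n ⟨0, hr⟩ (d * n ⟨0, hr⟩))) := by
  set D : (Fin r → ℕ) → (Fin r → ℕ) :=
    fun n => Function.update n ⟨0, hr⟩ (d * n ⟨0, hr⟩) with hD
  have hDadd : ∀ n m : Fin r → ℕ, D (n + m) = D n + D m := by
    intro n m
    funext i
    by_cases h : i = ⟨0, hr⟩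
    · subst h
      simp [hD, Function.update, mul_add]
    · simp [hD, Function.update, h]
  set φ : ((Fin r → ℕ) → K) →ₗ[K] ((Fin r → ℕ) → K) := LinearMap.funLeft K K D with hφ
  have key : ∀ m, mshift (fun n : Fin r → ℕ => a (D n)) m = φ (mshift a (D m)) := by
    intro m
    funext n
    simp [mshift, hφ, LinearMap.funLeft, hDadd]
  have hsub : Set.range (mshift (fun n : Fin r → ℕ => a (D n)))
      ⊆ φ '' Set.range (mshift a) := by
    rintro _ ⟨m, rfl⟩
    exact ⟨mshift a (D m), ⟨D m, rfl⟩, (key m).symm⟩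
  have hle : Submodule.span K (Set.range (mshift (fun n : Fin r → ℕ => a (D n))))
      ≤ Submodule.map φ (Submodule.span K (Set.range (mshift a))) := by
    rw [Submodule.map_span]
    exact Submodule.span_mono hsub
  have : FiniteDimensional K (Submodule.span K (Set.range (mshift a))) := ha
  have hfin : FiniteDimensional K
      (Submodule.map φ (Submodule.span K (Set.range (mshift a)))) :=
    Module.Finite.map _ φ
  exact Submodule.finiteDimensional_of_le hle
end

section
/- Let K be a field, r ≥ 1 and d ≥ 1 integers, and let H ∈ K[[t₁,…,t_r]] be a formal power series such that (i) there exist polynomials P, Q ∈ K[t₁,…,t_r] with Q ≠ 0 and H·Q = P in K[[t₁,…,t_r]], and (ii) every monomial occurring in H has its t₁-exponent divisible by d. Then there exist polynomials P', Q' ∈ K[t₁,…,t_r], with Q' ≠ 0, such that every monomial occurring in P' and in Q' has its t₁-exponent divisible by d and H·Q' = P' in K[[t₁,…,t_r]]. -/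
/-!
Grade `K[t₁,…,t_r]` by `ZMod d` through the `t₁`-exponent. Since `H` is concentrated in
degree `0`, multiplication by `H` respects the grading, so `H·Q = P` gives `H·Qₙ = Pₙ` for
the components of any degree `n`; choose `n` with `Qₙ ≠ 0`. Then `Qₙ^d` and `Pₙ·Qₙ^(d-1)`
have degree `d·n = 0` and `H·Qₙ^d = Pₙ·Qₙ^(d-1)`.
-/

open MvPolynomial
open Finsupp (weight weight_single_index)

section WeightedGrading

variable {σ M R : Type*} [AddCommMonoid M] {w : σ → M}

theorem MvPowerSeries.mul_weightedHomogeneousComponent_eq [CommSemiring R]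
    {H : MvPowerSeries σ R} (hH : ∀ m, weight w m ≠ 0 → MvPowerSeries.coeff m H = 0)
    {P Q : MvPolynomial σ R} (hPQ : H * (Q : MvPowerSeries σ R) = P) (n : M) :
    H * (MvPolynomial.weightedHomogeneousComponent w n Q : MvPowerSeries σ R) =
      MvPolynomial.weightedHomogeneousComponent w n P := by
  classical
  ext m
  rw [MvPolynomial.coeff_coe, MvPolynomial.coeff_weightedHomogeneousComponent,
    ← MvPolynomial.coeff_coe, ← hPQ, coeff_mul, coeff_mul, Finset.ite_sum_zero]
  refine Finset.sum_congr rfl fun ⟨a, b⟩ hab => ?_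
  rw [Finset.HasAntidiagonal.mem_antidiagonal] at hab
  by_cases ha : coeff a H = 0
  · simp [ha]
  · have hb : weight w b = weight w m := by
      rw [← hab, map_add, of_not_not (mt (hH a) ha), zero_add]
    rw [MvPolynomial.coeff_coe, MvPolynomial.coeff_weightedHomogeneousComponent, hb, mul_ite,
      mul_zero, MvPolynomial.coeff_coe]

theorem MvPolynomial.exists_weightedHomogeneousComponent_ne_zero [CommSemiring R]
    {Q : MvPolynomial σ R} (hQ : Q ≠ 0) : ∃ n, weightedHomogeneousComponent w n Q ≠ 0 := by
  classical
  obtain ⟨m, hm⟩ := exists_coeff_ne_zero hQ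
  refine ⟨weight w m, fun h => hm ?_⟩
  simpa [coeff_weightedHomogeneousComponent] using congr_arg (coeff m) h

theorem MvPowerSeries.exists_isWeightedHomogeneous_zero_mul_eq [CommRing R] [IsDomain R]
    {d : ℕ} (hd : 0 < d) (hM : ∀ n : M, d • n = 0)
    {H : MvPowerSeries σ R} (hH : ∀ m, weight w m ≠ 0 → MvPowerSeries.coeff m H = 0)
    {P Q : MvPolynomial σ R} (hQ : Q ≠ 0) (hPQ : H * (Q : MvPowerSeries σ R) = P) :
    ∃ P' Q' : MvPolynomial σ R, Q' ≠ 0 ∧ MvPolynomial.IsWeightedHomogeneous w P' 0 ∧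
      MvPolynomial.IsWeightedHomogeneous w Q' 0 ∧ H * (Q' : MvPowerSeries σ R) = P' := by
  obtain ⟨n, hQn⟩ := exists_weightedHomogeneousComponent_ne_zero (w := w) hQ
  set Qn := MvPolynomial.weightedHomogeneousComponent w n Q
  set Pn := MvPolynomial.weightedHomogeneousComponent w n P
  have hQn_hom : MvPolynomial.IsWeightedHomogeneous w Qn n :=
    weightedHomogeneousComponent_isWeightedHomogeneous n Q
  have hPn_hom : MvPolynomial.IsWeightedHomogeneous w Pn n :=
    weightedHomogeneousComponent_isWeightedHomogeneous n P
  have hd' : d = d - 1 + 1 := (Nat.succ_pred_eq_of_pos hd).symm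
  refine ⟨Pn * Qn ^ (d - 1), Qn ^ d, pow_ne_zero d hQn, ?_, hM n ▸ hQn_hom.pow d, ?_⟩
  · have := hPn_hom.mul (hQn_hom.pow (d - 1))
    rwa [← succ_nsmul', ← hd', hM] at this
  · rw [coe_pow, coe_mul, coe_pow, hd', pow_succ', ← mul_assoc,
      mul_weightedHomogeneousComponent_eq hH hPQ, ← hd']

end WeightedGrading

theorem Finsupp.weight_single_one_eq_zero_iff_dvd {σ : Type*} [DecidableEq σ] (d : ℕ) (i : σ)
    (m : σ →₀ ℕ) : weight (Pi.single i (1 : ZMod d)) m = 0 ↔ d ∣ m i := by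
  rw [weight_single_index, nsmul_one, ZMod.natCast_eq_zero_iff]

/-- if a rational multivariate power series only involves monomials whose
`t₁`-exponent is divisible by `d`, then it admits a rational expression `H·Q' = P'` in
which all monomials of `P'` and `Q'` have `t₁`-exponent divisible by `d`. -/
theorem rational_divisible_exponents {K : Type*} [Field K] {r : ℕ} (hr : 1 ≤ r)
    (d : ℕ) (hd : 1 ≤ d) (H : MvPowerSeries (Fin r) K)
    (P Q : MvPolynomial (Fin r) K) (hQ : Q ≠ 0)
    (hPQ : H * (Q : MvPowerSeries (Fin r) K) = (P : MvPowerSeries (Fin r) K))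
    (hdvd : ∀ m : Fin r →₀ ℕ, ¬ d ∣ m ⟨0, hr⟩ → MvPowerSeries.coeff m H = 0) :
    ∃ P' Q' : MvPolynomial (Fin r) K, Q' ≠ 0 ∧
      (∀ m ∈ P'.support, d ∣ m ⟨0, hr⟩) ∧
      (∀ m ∈ Q'.support, d ∣ m ⟨0, hr⟩) ∧
      H * (Q' : MvPowerSeries (Fin r) K) = (P' : MvPowerSeries (Fin r) K) := by
  set w : Fin r → ZMod d := Pi.single ⟨0, hr⟩ 1
  have hH : ∀ m, weight w m ≠ 0 → MvPowerSeries.coeff m H = 0 := fun m hm =>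
    hdvd m (mt (Finsupp.weight_single_one_eq_zero_iff_dvd d _ m).mpr hm)
  obtain ⟨P', Q', hQ', hP'_hom, hQ'_hom, hP'Q'⟩ :=
    MvPowerSeries.exists_isWeightedHomogeneous_zero_mul_eq hd (fun n => by simp) hH hQ hPQ
  have hsupp : ∀ {φ : MvPolynomial (Fin r) K}, IsWeightedHomogeneous w φ 0 →
      ∀ m ∈ φ.support, d ∣ m ⟨0, hr⟩ := fun hφ m hm =>
    (Finsupp.weight_single_one_eq_zero_iff_dvd d _ m).mp (hφ (mem_support_iff.mp hm))
  exact ⟨P', Q', hQ', hsupp hP'_hom, hsupp hQ'_hom, hP'Q'⟩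
end

section
/- Let K be a field, let (P_n)_{n∈ℕ} be an eventually linearly recursive sequence of polynomials in K[x], and let a : ℕ → K be an eventually linearly recursive sequence. Then the sequence (P_n ▷ a)_{n∈ℕ} is eventually linearly recursive. -/
/-- A sequence `a : ℕ → R` in a commutative ring is eventually linearly recursive:
there are `T ≥ 1`, coefficients `c₀,…,c_{T-1} ∈ R` and `N ∈ ℕ` with
`a (n + T) = Σ_{i<T} cᵢ · a (n + i)` for all `n ≥ N`. -/
def EvLinRec {R : Type*} [CommRing R] (a : ℕ → R) : Prop :=
  ∃ T : ℕ, 1 ≤ T ∧ ∃ c : Fin T → R, ∃ N : ℕ, ∀ n ≥ N,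
    a (n + T) = ∑ i : Fin T, c i * a (n + (i : ℕ))

/-- The convolution `P ▷ a = Σ_k (coeff of x^k in P) · a(k)` of a polynomial with a
sequence. -/
def polyTri {K : Type*} [Field K] (P : Polynomial K) (a : ℕ → K) : K :=
  ∑ k ∈ P.support, P.coeff k * a k

/-!
Since `a` satisfies `a (n + S) = Σ dᵢ a (n + i)` for `n ≥ N`, the functional `P ↦ P ▷ a` vanishes
on the ideal generated by `Q = X ^ N (X ^ S - Σ dᵢ X ^ i)`, so `P ▷ a` only depends on the image of
`P` in the finite-dimensional algebra `A = K[X]/(Q)`. There the images of `P n` satisfy the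
recursion of `P` with coefficients in `A`, so their windows of length `T` evolve under an
`A`-linear, hence `K`-linear, map of the finite-dimensional space `A ^ T`, and Cayley–Hamilton for
that map yields a recursion over `K` for every `K`-linear functional of the windows.
-/

open Polynomial

def companion {A : Type*} [CommRing A] {T : ℕ} (c : Fin T → A) :
    (Fin T → A) →ₗ[A] (Fin T → A) where
  toFun v i := if h : (i : ℕ) + 1 < T then v ⟨i + 1, h⟩ else ∑ j, c j * v j
  map_add' v w := by
    funext i
    split_ifs <;> simp [*, mul_add, Finset.sum_add_distrib]
  map_smul' r v := by
    funext i
    split_ifs <;> simp [*, Finset.mul_sum, mul_left_comm]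

namespace EvLinRec

theorem map {R S : Type*} [CommRing R] [CommRing S] {a : ℕ → R} (ha : EvLinRec a) (g : R →+* S) :
    EvLinRec (fun n => g (a n)) := by
  obtain ⟨T, hT, c, N, h⟩ := ha
  exact ⟨T, hT, fun i => g (c i), N, fun n hn => by simp [h n hn, map_sum, map_mul]⟩

theorem of_linear_orbit {R V : Type*} [CommRing R] [Nontrivial R] [AddCommGroup V] [Module R V]
    [Module.Finite R V] (f : V →ₗ[R] V) (φ : V →ₗ[R] R) {w : ℕ → V} {N : ℕ}
    (hw : ∀ n ≥ N, w (n + 1) = f (w n)) : EvLinRec (fun n => φ (w n)) := by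
  obtain ⟨p, hpm, hp0⟩ := LinearMap.exists_monic_and_aeval_eq_zero R f
  -- multiplying by `X` makes the order of the recursion at least one
  set q := p * X
  have hqm : q.Monic := hpm.mul monic_X
  have hq0 : aeval f q = 0 := by simp [q, hp0]
  have hdeg : 1 ≤ q.natDegree := by
    rw [hpm.natDegree_mul monic_X, natDegree_X]; omega
  have hpow : ∀ n ≥ N, ∀ k, w (n + k) = (f ^ k) (w n) := by
    intro n hn k
    induction k with
    | zero => simp
    | succ k ih => rw [← add_assoc, hw _ (by omega), ih, pow_succ', Module.End.mul_apply]
  have hfq : f ^ q.natDegree = ∑ i ∈ Finset.range q.natDegree, (-q.coeff i) • f ^ i := by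
    rw [aeval_eq_sum_range, Finset.sum_range_succ, hqm.coeff_natDegree, one_smul] at hq0
    simp only [neg_smul, Finset.sum_neg_distrib]
    exact eq_neg_of_add_eq_zero_right hq0
  refine ⟨q.natDegree, hdeg, fun i => -q.coeff i, N, fun n hn => ?_⟩
  simp only
  rw [hpow n hn, hfq, Fin.sum_univ_eq_sum_range (fun i => -q.coeff i * φ (w (n + i)))]
  simp [map_sum, hpow n hn]

theorem map_linearMap {K A : Type*} [CommRing K] [Nontrivial K] [CommRing A] [Algebra K A]
    [Module.Finite K A] {p : ℕ → A} (hp : EvLinRec p) (φ : A →ₗ[K] K) :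
    EvLinRec (fun n => φ (p n)) := by
  obtain ⟨T, hT, c, N, h⟩ := hp
  let window : ℕ → Fin T → A := fun n i => p (n + i)
  have hstep : ∀ n ≥ N, window (n + 1) = (companion c).restrictScalars K (window n) := by
    intro n hn
    funext i
    by_cases hi : (i : ℕ) + 1 < T
    · simp [window, companion, hi, add_assoc, add_comm 1]
    · have : n + 1 + i = n + T := by omega
      simp [window, companion, hi, this, h n hn]
  exact of_linear_orbit _ (φ ∘ₗ LinearMap.proj ⟨0, hT⟩) hstep

end EvLinRec

section polyTri

variable {K : Type*} [Field K]

def polyTriₗ (a : ℕ → K) : K[X] →ₗ[K] K :=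
  lsum fun k => LinearMap.mulRight K (a k)

@[simp]
theorem polyTriₗ_apply (a : ℕ → K) (P : K[X]) : polyTriₗ a P = polyTri P a := rfl

theorem polyTri_add (P Q : K[X]) (a : ℕ → K) : polyTri (P + Q) a = polyTri P a + polyTri Q a :=
  map_add (polyTriₗ a) P Q

theorem polyTri_C_mul_X_pow (a : ℕ → K) (c : K) (k : ℕ) : polyTri (C c * X ^ k) a = c * a k := by
  rw [← polyTriₗ_apply, C_mul_X_pow_eq_monomial]
  simp [polyTriₗ]

theorem polyTri_X_pow (a : ℕ → K) (k : ℕ) : polyTri (X ^ k) a = a k := by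
  simpa using polyTri_C_mul_X_pow a 1 k

theorem polyTri_X_pow_mul_X_pow_sub_sum (a : ℕ → K) {S : ℕ} (d : Fin S → K) (m : ℕ) :
    polyTri (X ^ m * (X ^ S - ∑ i : Fin S, C (d i) * X ^ (i : ℕ))) a =
      a (m + S) - ∑ i : Fin S, d i * a (m + i) := by
  have : X ^ m * (X ^ S - ∑ i : Fin S, C (d i) * X ^ (i : ℕ)) =
      X ^ (m + S) - ∑ i : Fin S, C (d i) * X ^ (m + i) := by
    rw [mul_sub, pow_add, Finset.mul_sum]
    exact congrArg _ (Finset.sum_congr rfl fun i _ => by ring)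
  rw [this, ← polyTriₗ_apply, map_sub, map_sum]
  simp only [polyTriₗ_apply, polyTri_X_pow, polyTri_C_mul_X_pow]

theorem polyTri_mul_eq_zero {a : ℕ → K} {S N : ℕ} {d : Fin S → K}
    (h : ∀ n ≥ N, a (n + S) = ∑ i : Fin S, d i * a (n + i)) (M : K[X]) :
    polyTri (X ^ N * (X ^ S - ∑ i : Fin S, C (d i) * X ^ (i : ℕ)) * M) a = 0 := by
  induction M using Polynomial.induction_on' with
  | add M M' hM hM' => rw [mul_add, polyTri_add, hM, hM', add_zero]
  | monomial k c =>
    have : X ^ N * (X ^ S - ∑ i : Fin S, C (d i) * X ^ (i : ℕ)) * monomial k c =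
        c • (X ^ (N + k) * (X ^ S - ∑ i : Fin S, C (d i) * X ^ (i : ℕ))) := by
      rw [← C_mul_X_pow_eq_monomial, smul_eq_C_mul, pow_add]
      ring
    rw [this, ← polyTriₗ_apply, map_smul, polyTriₗ_apply, polyTri_X_pow_mul_X_pow_sub_sum,
      h _ (Nat.le_add_right N k), sub_self, smul_zero]

end polyTri

/-- if `(P_n)` is an eventually linearly recursive sequence of polynomials
and `a` is an eventually linearly recursive sequence, then `(P_n ▷ a)` is eventually
linearly recursive. -/
theorem evLinRec_polyTri {K : Type*} [Field K] (P : ℕ → Polynomial K) (hP : EvLinRec P)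
    (a : ℕ → K) (ha : EvLinRec a) :
    EvLinRec (fun n => polyTri (P n) a) := by
  obtain ⟨S, -, d, N, hrec⟩ := ha
  set Q := X ^ N * (X ^ S - ∑ i : Fin S, C (d i) * X ^ (i : ℕ))
  have hQ : Q.Monic := (monic_X_pow N).mul (monic_X_pow_sub (degree_sum_fin_lt d))
  have := hQ.finite_adjoinRoot
  have hmod (R : K[X]) : polyTri (R %ₘ Q) a = polyTri R a := by
    conv_rhs => rw [← modByMonic_add_div R Q]
    rw [polyTri_add, polyTri_mul_eq_zero hrec, add_zero]
  simpa [AdjoinRoot.modByMonicHom_mk, hmod] using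
    (hP.map (AdjoinRoot.mk Q)).map_linearMap (polyTriₗ a ∘ₗ AdjoinRoot.modByMonicHom hQ)
end

section
/- Let K be a field, let (P_n)_{n∈ℕ} be an eventually linearly recursive sequence of polynomials in K[x], and let a : ℕ → K be a sequence that eventually vanishes, i.e. a(n) = 0 for all sufficiently large n. Then the sequence (P_n ▷ a)_{n∈ℕ} is eventually linearly recursive. -/
open Polynomial

lemma polyTri_aux {K : Type*} [Field K] (P : Polynomial K) (a : ℕ → K) (M : ℕ)
    (hM : ∀ n ≥ M, a n = 0) :
    ∑ k ∈ P.support, P.coeff k * a k = ∑ k ∈ Finset.range M, P.coeff k * a k := by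
  have h1 : ∑ k ∈ P.support, P.coeff k * a k
      = ∑ k ∈ P.support ∪ Finset.range M, P.coeff k * a k := by
    refine Finset.sum_subset Finset.subset_union_left ?_
    intro k _ hk
    rw [Polynomial.notMem_support_iff.mp hk, zero_mul]
  have h2 : ∑ k ∈ Finset.range M, P.coeff k * a k
      = ∑ k ∈ P.support ∪ Finset.range M, P.coeff k * a k := by
    refine Finset.sum_subset Finset.subset_union_right ?_
    intro k _ hk
    rw [hM k (by simpa using hk), mul_zero]
  rw [h1, h2]

lemma coeff_mul_trunc {K : Type*} [Field K] {M : ℕ} (c Q : Polynomial K) (k : Fin M) :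
    (c * Q).coeff k = ∑ j : Fin M,
      (if (j : ℕ) ≤ (k : ℕ) then c.coeff ((k : ℕ) - (j : ℕ)) else 0) * Q.coeff j := by
  rw [mul_comm, Polynomial.coeff_mul, Finset.Nat.sum_antidiagonal_eq_sum_range_succ_mk]
  rw [Fin.sum_univ_eq_sum_range
    (fun j => (if j ≤ (k : ℕ) then c.coeff ((k : ℕ) - j) else 0) * Q.coeff j) M]
  rw [← Finset.sum_subset (Finset.range_subset_range.mpr k.isLt)]
  · refine Finset.sum_congr rfl ?_
    intro j hj
    rw [if_pos (by simpa using Nat.lt_succ_iff.mp (Finset.mem_range.mp hj)), mul_comm]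
  · intro j _ hj
    rw [if_neg (by simpa using fun h => hj (Finset.mem_range.mpr (Nat.lt_succ_of_le h))), zero_mul]

def stepMap {K : Type*} [Field K] (T M : ℕ) (c : Fin T → Polynomial K) :
    (Fin T → Fin M → K) →ₗ[K] (Fin T → Fin M → K) where
  toFun w := fun i k =>
    if h : (i : ℕ) + 1 < T then w ⟨(i : ℕ) + 1, h⟩ k
    else ∑ i' : Fin T, ∑ j : Fin M,
      (if (j : ℕ) ≤ (k : ℕ) then (c i').coeff ((k : ℕ) - (j : ℕ)) else 0) * w i' j
  map_add' w1 w2 := by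
    funext i k
    by_cases h : (i : ℕ) + 1 < T <;>
      simp [h, mul_add, Finset.sum_add_distrib]
  map_smul' r w := by
    funext i k
    by_cases h : (i : ℕ) + 1 < T <;>
      simp [h, Finset.mul_sum, mul_left_comm]

def evalMap {K : Type*} [Field K] {T : ℕ} (M : ℕ) (hT : 0 < T) (a : ℕ → K) :
    (Fin T → Fin M → K) →ₗ[K] K where
  toFun w := ∑ k : Fin M, w ⟨0, hT⟩ k * a k
  map_add' w1 w2 := by simp [add_mul, Finset.sum_add_distrib]
  map_smul' r w := by simp [Finset.mul_sum, mul_assoc]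


/-- if `(P_n)` is an eventually linearly recursive sequence of polynomials
and `a` eventually vanishes, then `(P_n ▷ a)` is eventually linearly recursive. -/
theorem evLinRec_polyTri_eventually_zero {K : Type*} [Field K] (P : ℕ → Polynomial K)
    (hP : EvLinRec P) (a : ℕ → K) (ha : ∃ N : ℕ, ∀ n ≥ N, a n = 0) :
    EvLinRec (fun n => polyTri (P n) a) := by
  classical
  obtain ⟨T, hT, c, Np, hrec⟩ := hP
  obtain ⟨M, hM⟩ := ha
  -- trivial case M = 0
  rcases Nat.eq_zero_or_pos M with hM0 | hMpos
  · have ha0 : ∀ n, a n = 0 := fun n => hM n (by omega)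
    exact ⟨1, le_refl 1, fun _ => 0, 0, fun n _ => by simp [polyTri, ha0]⟩
  have hT0 : 0 < T := hT
  set A := stepMap T M c with hA
  set L := evalMap M hT0 a with hL
  set W : ℕ → Fin T → Fin M → K := fun n i k => (P (n + (i : ℕ))).coeff k with hW
  have hfW : ∀ n, polyTri (P n) a = L (W n) := by
    intro n
    rw [polyTri, polyTri_aux (P n) a M hM, hL]
    simp only [evalMap, LinearMap.coe_mk, AddHom.coe_mk, hW]
    rw [Fin.sum_univ_eq_sum_range (fun k => (P (n + 0)).coeff k * a k) M]
    simp
  have hstep : ∀ n ≥ Np, W (n + 1) = A (W n) := by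
    intro n hn
    funext i k
    show (P (n + 1 + (i : ℕ))).coeff k = _
    simp only [hA, stepMap, LinearMap.coe_mk, AddHom.coe_mk]
    split_ifs with h
    · have : n + 1 + (i : ℕ) = n + ((i : ℕ) + 1) := by omega
      rw [this]
    · have hi : (i : ℕ) + 1 = T := le_antisymm i.isLt (not_lt.mp h)
      have h2 : n + 1 + (i : ℕ) = n + T := by omega
      rw [h2, hrec n hn, Polynomial.finset_sum_coeff]
      exact Finset.sum_congr rfl fun i' _ => coeff_mul_trunc (c i') (P (n + (i' : ℕ))) k
  have hWn : ∀ n, W (Np + n) = (A ^ n) (W Np) := by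
    intro n
    induction n with
    | zero => simp
    | succ n ih =>
      have h1 : Np + (n + 1) = (Np + n) + 1 := by omega
      rw [h1, hstep _ (by omega), ih, pow_succ', Module.End.mul_apply]
  -- minimal polynomial of A
  haveI : Nontrivial (Fin T → Fin M → K) := by
    have : Nonempty (Fin T) := ⟨⟨0, hT0⟩⟩
    have : Nonempty (Fin M) := ⟨⟨0, hMpos⟩⟩
    infer_instance
  have hint : IsIntegral K A := LinearMap.isIntegral A
  set μ := minpoly K A with hμ
  have hmonic : μ.Monic := minpoly.monic hint
  set m := μ.natDegree with hmdef
  have hm : 0 < m := minpoly.natDegree_pos hint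
  have haev : (Polynomial.aeval A) μ = 0 := minpoly.aeval K A
  have hAm : A ^ m = ∑ i ∈ Finset.range m, (-(μ.coeff i)) • A ^ i := by
    have := Polynomial.aeval_eq_sum_range (p := μ) A
    rw [haev, ← hmdef, Finset.sum_range_succ, hmonic.coeff_natDegree, one_smul] at this
    have := eq_neg_of_add_eq_zero_right this.symm
    rw [this, ← Finset.sum_neg_distrib]
    exact Finset.sum_congr rfl fun i _ => (neg_smul _ _).symm
  refine ⟨m, hm, fun i => -(μ.coeff i), Np, ?_⟩
  intro n hn
  obtain ⟨t, rfl⟩ : ∃ t, n = Np + t := ⟨n - Np, by omega⟩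
  have key : ∀ s, polyTri (P (Np + s)) a = L ((A ^ s) (W Np)) := by
    intro s; rw [hfW, hWn]
  simp only []
  have hrw : ∀ i : Fin m, Np + t + (i : ℕ) = Np + (t + (i : ℕ)) := fun i => by omega
  have h1 : Np + t + m = Np + (t + m) := by omega
  rw [h1, key]
  have h2 : (A ^ (t + m)) (W Np) = ∑ i ∈ Finset.range m,
      (-(μ.coeff i)) • (A ^ (t + i)) (W Np) := by
    rw [pow_add, Module.End.mul_apply, hAm, LinearMap.sum_apply]
    rw [map_sum]
    refine Finset.sum_congr rfl fun i _ => ?_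
    rw [LinearMap.smul_apply, map_smul, ← Module.End.mul_apply, ← pow_add]
  rw [h2, map_sum]
  rw [Fin.sum_univ_eq_sum_range (fun i => (-(μ.coeff i)) * polyTri (P (Np + t + i)) a) m]
  refine Finset.sum_congr rfl fun i _ => ?_
  rw [map_smul, smul_eq_mul]
  congr 1
  rw [show Np + t + i = Np + (t + i) by omega, key]
end
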